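/- There exists a real number λ such that U^{hijk} = λ·(h^{hj}h^{ik} − h^{hk}h^{ij}) for all indices h, i, j, k if and only if there exists a real number S such that K²·S^{hijk} = S·(h^{hj}h^{ik} − h^{hk}h^{ij}) for all indices h, i, j, k (the S3-likeness condition at p); moreover, if U^{hijk} = λ·(h^{hj}h^{ik} − h^{hk}h^{ij}) holds for all indices, then K²·S^{hijk} = S·(h^{hj}h^{ik} − h^{hk}h^{ij}) holds with S = ((m−2)²/4)·[ (m−1)λ + 1/(m−1) ]. -/

import Mathlib

open Finset

noncomputable section

/-- `A(p) = ∑ a^{i₁…i_m} p_{i₁}⋯p_{i_m}`, where `m = M + 3 ≥ 3`. -/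
def Afun {n M : ℕ} (a : (Fin (M + 3) → Fin n) → ℝ) (p : Fin n → ℝ) : ℝ :=
  ∑ ι : Fin (M + 3) → Fin n, a ι * ∏ t, p (ι t)

/-- `K(p) = A(p)^{1/m}`. -/
def Kfun {n M : ℕ} (a : (Fin (M + 3) → Fin n) → ℝ) (p : Fin n → ℝ) : ℝ :=
  Afun a p ^ ((1 : ℝ) / (M + 3))

/-- `a^i = (∑ a^{i i₂…i_m} p_{i₂}⋯p_{i_m}) / K^{m-1}`. -/
def aU1 {n M : ℕ} (a : (Fin (M + 3) → Fin n) → ℝ) (i : Fin n) (p : Fin n → ℝ) : ℝ :=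
  (∑ ι : Fin (M + 2) → Fin n, a (Fin.cons i ι) * ∏ t, p (ι t)) / Kfun a p ^ (M + 2)

/-- `a^{ij} = (∑ a^{i j i₃…i_m} p_{i₃}⋯p_{i_m}) / K^{m-2}`. -/
def aU2 {n M : ℕ} (a : (Fin (M + 3) → Fin n) → ℝ) (i j : Fin n) (p : Fin n → ℝ) : ℝ :=
  (∑ ι : Fin (M + 1) → Fin n, a (Fin.cons i (Fin.cons j ι)) * ∏ t, p (ι t)) / Kfun a p ^ (M + 1)

/-- `a^{ijk} = (∑ a^{i j k i₄…i_m} p_{i₄}⋯p_{i_m}) / K^{m-3}`. -/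
def aU3 {n M : ℕ} (a : (Fin (M + 3) → Fin n) → ℝ) (i j k : Fin n) (p : Fin n → ℝ) : ℝ :=
  (∑ ι : Fin M → Fin n, a (Fin.cons i (Fin.cons j (Fin.cons k ι))) * ∏ t, p (ι t)) / Kfun a p ^ M

/-- Partial derivative `∂f/∂p_k` of a function of `p`. -/
def pd {n : ℕ} (f : (Fin n → ℝ) → ℝ) (k : Fin n) (p : Fin n → ℝ) : ℝ :=
  deriv (fun t => f (Function.update p k t)) (p k)

/-- Fundamental metrical d-tensor `g^{ij} = (1/2) ∂²(K²)/∂p_i∂p_j`. -/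
def gU {n M : ℕ} (a : (Fin (M + 3) → Fin n) → ℝ) (i j : Fin n) (p : Fin n → ℝ) : ℝ :=
  (1 / 2 : ℝ) * pd (fun q => pd (fun r => Kfun a r ^ 2) j q) i p

/-- Angular metrical d-tensor `h^{ij} = K ∂²K/∂p_i∂p_j`. -/
def hU {n M : ℕ} (a : (Fin (M + 3) → Fin n) → ℝ) (i j : Fin n) (p : Fin n → ℝ) : ℝ :=
  Kfun a p * pd (fun q => pd (Kfun a) j q) i p

/-- v-torsion d-tensor `C^{ijk} = -(1/2) ∂g^{ij}/∂p_k`. -/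
def CU {n M : ℕ} (a : (Fin (M + 3) → Fin n) → ℝ) (i j k : Fin n) (p : Fin n → ℝ) : ℝ :=
  -(1 / 2 : ℝ) * pd (gU a i j) k p

/-- Symmetry of `a` in all of its `m` indices. -/
def aSym {n M : ℕ} (a : (Fin (M + 3) → Fin n) → ℝ) : Prop :=
  ∀ (σ : Equiv.Perm (Fin (M + 3))) (ι : Fin (M + 3) → Fin n), a (ι ∘ σ) = a ι

/-- `a_i = ∑_s a_{is} a^s`, where `aLow` is the inverse matrix of `(a^{ij})`. -/
def aL {n M : ℕ} (a : (Fin (M + 3) → Fin n) → ℝ) (aLow : Matrix (Fin n) (Fin n) ℝ)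
    (p : Fin n → ℝ) (i : Fin n) : ℝ :=
  ∑ s, aLow i s * aU1 a s p

/-- `a_i^{jk} = ∑_s a_{is} a^{sjk}`. -/
def aL3 {n M : ℕ} (a : (Fin (M + 3) → Fin n) → ℝ) (aLow : Matrix (Fin n) (Fin n) ℝ)
    (p : Fin n → ℝ) (i j k : Fin n) : ℝ :=
  ∑ s, aLow i s * aU3 a s j k p

/-- `g_{ij} = (1/(m-1)) a_{ij} + ((m-2)/(m-1)) a_i a_j`, the inverse of `g^{ij}`. -/
def gL {n M : ℕ} (a : (Fin (M + 3) → Fin n) → ℝ) (aLow : Matrix (Fin n) (Fin n) ℝ)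
    (p : Fin n → ℝ) (i j : Fin n) : ℝ :=
  (1 / (M + 2 : ℝ)) * aLow i j + ((M + 1 : ℝ) / (M + 2)) * aL a aLow p i * aL a aLow p j

/-- v-derivation components `C_i^{jk} = ∑_s g_{is} C^{sjk}`. -/
def CL {n M : ℕ} (a : (Fin (M + 3) → Fin n) → ℝ) (aLow : Matrix (Fin n) (Fin n) ℝ)
    (p : Fin n → ℝ) (i j k : Fin n) : ℝ :=
  ∑ s, gL a aLow p i s * CU a s j k p

/-- v-curvature d-tensor `S^{hijk} = ∑_r (C_r^{ij} C^{rhk} - C_r^{ik} C^{rhj})`. -/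
def Scurv {n M : ℕ} (a : (Fin (M + 3) → Fin n) → ℝ) (aLow : Matrix (Fin n) (Fin n) ℝ)
    (p : Fin n → ℝ) (h i j k : Fin n) : ℝ :=
  ∑ r, (CL a aLow p r i j * CU a r h k p - CL a aLow p r i k * CU a r h j p)

/-- `U^{hijk} = ∑_r (a_r^{ij} a^{rhk} - a_r^{ik} a^{rhj})`. -/
def Ufun {n M : ℕ} (a : (Fin (M + 3) → Fin n) → ℝ) (aLow : Matrix (Fin n) (Fin n) ℝ)
    (p : Fin n → ℝ) (h i j k : Fin n) : ℝ :=
  ∑ r, (aL3 a aLow p r i j * aU3 a r h k p - aL3 a aLow p r i k * aU3 a r h j p)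

/-!
Everything reduces to Euler's relations for the symmetric form `A`. Differentiating the form
gives `∂K/∂p_k = a^k`, `∂a^j/∂p_k = (m-1)(a^{jk} - a^j a^k)/K` and
`∂a^{ij}/∂p_k = (m-2)(a^{ijk} - a^{ij} a^k)/K`, hence `h^{ij} = (m-1)(a^{ij} - a^i a^j)`,
`g^{ij} = (m-1) a^{ij} - (m-2) a^i a^j` and `C^{ijk} = -((m-1)(m-2)/2K) D^{ijk}`, where
`D^{ijk} = a^{ijk} - a^{ij}a^k - a^{ik}a^j - a^{jk}a^i + 2a^ia^ja^k`.
Since `a_i = p_i / K`, contracting with `a_i` kills `D`, and a direct tensor computation yields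
`K² S^{hijk} = ((m-2)²/4) [(m-1) U^{hijk} + (h^{hj}h^{ik} - h^{hk}h^{ij})/(m-1)]`.
As `(m-2)²(m-1)/4 ≠ 0`, the two conditions are equivalent, with the stated relation between
`λ` and `S`.
-/

-- `Afun a` is `homForm a`, and the numerators of `aU1`, `aU2`, `aU3` are `homForm`s,
-- definitionally.
def homForm {n ℓ : ℕ} (c : (Fin ℓ → Fin n) → ℝ) (q : Fin n → ℝ) : ℝ :=
  ∑ ι : Fin ℓ → Fin n, c ι * ∏ t, q (ι t)

def IsSymmFamily {α β : Type*} {ℓ : ℕ} (c : (Fin ℓ → α) → β) : Prop :=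
  ∀ (σ : Equiv.Perm (Fin ℓ)) (ι : Fin ℓ → α), c (ι ∘ σ) = c ι

section SymmFamily

variable {α β : Type*} {ℓ : ℕ}

theorem IsSymmFamily.cons {c : (Fin (ℓ + 1) → α) → β} (hc : IsSymmFamily c) (x : α) :
    IsSymmFamily fun ι : Fin ℓ → α => c (Fin.cons x ι) := by
  intro σ ι
  have hcomp : (Fin.cons x ι : Fin (ℓ + 1) → α) ∘ Equiv.Perm.decomposeFin.symm (0, σ) =
      Fin.cons x (ι ∘ σ) := by
    funext t
    cases t using Fin.cases <;>
      simp [Equiv.Perm.decomposeFin_symm_apply_zero, Equiv.Perm.decomposeFin_symm_apply_succ]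
  show c (Fin.cons x (ι ∘ σ)) = c (Fin.cons x ι)
  rw [← hcomp, hc]

theorem IsSymmFamily.cons_cons_comm {c : (Fin (ℓ + 2) → α) → β} (hc : IsSymmFamily c)
    (x y : α) (ι : Fin ℓ → α) :
    c (Fin.cons x (Fin.cons y ι)) = c (Fin.cons y (Fin.cons x ι)) := by
  rw [← hc (Equiv.swap 0 1)]
  exact congrArg c (Matrix.cons_cons_comp_swap_zero_one x y ι)

end SymmFamily

theorem Fintype.sum_fun_fin_succ {α M : Type*} [Fintype α] [AddCommMonoid M]
    {ℓ : ℕ} (f : (Fin (ℓ + 1) → α) → M) :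
    ∑ ι, f ι = ∑ x, ∑ ι : Fin ℓ → α, f (Fin.cons x ι) := by
  rw [← (Fin.consEquiv fun _ => α).sum_comp, Fintype.sum_prod_type]
  rfl

section HomForm

variable {n ℓ : ℕ}

theorem homForm_succ (c : (Fin (ℓ + 1) → Fin n) → ℝ) (q : Fin n → ℝ) :
    homForm c q = ∑ x, q x * homForm (fun ι => c (Fin.cons x ι)) q := by
  simp only [homForm, Fintype.sum_fun_fin_succ, Fin.prod_univ_succ, Fin.cons_zero, Fin.cons_succ,
    Finset.mul_sum]
  exact Finset.sum_congr rfl fun x _ => Finset.sum_congr rfl fun ι _ => by ring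

theorem continuous_homForm (c : (Fin ℓ → Fin n) → ℝ) : Continuous (homForm c) := by
  unfold homForm
  fun_prop

theorem sum_mul_homForm_cons_div (c : (Fin (ℓ + 1) → Fin n) → ℝ) (q : Fin n → ℝ)
    {K : ℝ} (hK : K ≠ 0) :
    ∑ x, q x * (homForm (fun ι => c (Fin.cons x ι)) q / K ^ ℓ) =
      K * (homForm c q / K ^ (ℓ + 1)) := by
  rw [homForm_succ, Finset.sum_div, Finset.mul_sum]
  refine Finset.sum_congr rfl fun x _ => ?_
  field_simp
  ring

theorem hasDerivAt_update_apply (q : Fin n → ℝ) (k x : Fin n) :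
    HasDerivAt (fun t => Function.update q k t x) (if x = k then 1 else 0) (q k) := by
  by_cases hx : x = k
  · subst hx
    simpa using hasDerivAt_id' (q x)
  · simpa [hx] using hasDerivAt_const (q k) (q x)

theorem hasDerivAt_sum_update_mul {q : Fin n → ℝ} {k : Fin n} {F : Fin n → ℝ → ℝ}
    {F' : Fin n → ℝ} (hF : ∀ x, HasDerivAt (F x) (F' x) (q k)) :
    HasDerivAt (fun t => ∑ x, Function.update q k t x * F x t)
      (F k (q k) + ∑ x, q x * F' x) (q k) := by
  refine (HasDerivAt.fun_sum fun x _ =>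
    (hasDerivAt_update_apply q k x).mul (hF x)).congr_deriv ?_
  simp [Finset.sum_add_distrib]

theorem hasDerivAt_homForm_update {c : (Fin (ℓ + 1) → Fin n) → ℝ} (hc : IsSymmFamily c)
    (q : Fin n → ℝ) (k : Fin n) :
    HasDerivAt (fun t => homForm c (Function.update q k t))
      ((ℓ + 1) * homForm (fun ι => c (Fin.cons k ι)) q) (q k) := by
  -- Expand along the first slot; symmetry moves the differentiated slot to the front.
  induction ℓ with
  | zero =>
    have hconst : ∀ x, HasDerivAt (fun t => homForm (fun ι => c (Fin.cons x ι))
        (Function.update q k t)) 0 (q k) := fun x => by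
      simpa [homForm] using hasDerivAt_const (q k) (homForm (fun ι => c (Fin.cons x ι)) q)
    simpa [← homForm_succ] using hasDerivAt_sum_update_mul hconst
  | succ ℓ ih =>
    have h := hasDerivAt_sum_update_mul fun x => ih (hc.cons x)
    simp only [← homForm_succ, Function.update_eq_self] at h
    refine h.congr_deriv ?_
    rw [homForm_succ (fun ι => c (Fin.cons k ι)), Finset.mul_sum, ← Finset.sum_add_distrib]
    refine Finset.sum_congr rfl fun x _ => ?_
    simp_rw [hc.cons_cons_comm x k]
    push_cast
    ring

end HomForm

theorem pd_eq_of_eventuallyEq {n : ℕ} {f g : (Fin n → ℝ) → ℝ} {k : Fin n}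
    {p : Fin n → ℝ} {g' : ℝ}
    (hfg : ∀ᶠ t in nhds (p k), f (Function.update p k t) = g (Function.update p k t))
    (hg : HasDerivAt (fun t => g (Function.update p k t)) g' (p k)) : pd f k p = g' := by
  rw [pd, Filter.EventuallyEq.deriv_eq hfg]
  exact hg.deriv

section CartanMetric

variable {n M : ℕ} {a : (Fin (M + 3) → Fin n) → ℝ} {q : Fin n → ℝ}

theorem Kfun_pos (hq : 0 < Afun a q) : 0 < Kfun a q :=
  Real.rpow_pos_of_pos hq _

theorem Kfun_pow (hq : 0 < Afun a q) : Kfun a q ^ (M + 3) = Afun a q := by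
  rw [Kfun, ← Real.rpow_natCast, ← Real.rpow_mul hq.le, one_div, Nat.cast_add, Nat.cast_ofNat,
    inv_mul_cancel₀ (by positivity), Real.rpow_one]

theorem eventually_Afun_update_pos (hq : 0 < Afun a q) (k : Fin n) :
    ∀ᶠ t in nhds (q k), 0 < Afun a (Function.update q k t) := by
  have hc : Continuous fun t : ℝ => Afun a (Function.update q k t) :=
    (continuous_homForm a).comp (continuous_const.update k continuous_id)
  exact continuousAt_const.eventually_lt hc.continuousAt (by simpa using hq)

theorem aU2_comm (hsym : IsSymmFamily a) (i j : Fin n) : aU2 a i j q = aU2 a j i q := by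
  simp only [aU2, hsym.cons_cons_comm i j]

theorem aU3_comm₁₂ (hsym : IsSymmFamily a) (i j k : Fin n) :
    aU3 a i j k q = aU3 a j i k q := by
  simp only [aU3, hsym.cons_cons_comm i j]

theorem aU3_comm₂₃ (hsym : IsSymmFamily a) (i j k : Fin n) :
    aU3 a i j k q = aU3 a i k j q := by
  simp only [aU3, (hsym.cons i).cons_cons_comm j k]

theorem hasDerivAt_Kfun_update (hsym : IsSymmFamily a) (hq : 0 < Afun a q) (k : Fin n) :
    HasDerivAt (fun t => Kfun a (Function.update q k t)) (aU1 a k q) (q k) := by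
  have hq' : 0 < homForm a q := hq
  have hA := (hasDerivAt_homForm_update hsym q k).rpow_const (p := 1 / (M + 3))
    (Or.inl (by simpa using hq'.ne'))
  refine hA.congr_deriv ?_
  have hK := (Kfun_pos hq).ne'
  rw [Function.update_eq_self, Real.rpow_sub hq', Real.rpow_one]
  change _ = homForm (fun ι => a (Fin.cons k ι)) q / Kfun a q ^ (M + 2)
  rw [show homForm a q ^ (1 / ((M : ℝ) + 3)) = Kfun a q from rfl,
    show homForm a q = Kfun a q ^ (M + 3) from (Kfun_pow hq).symm]
  field_simp
  push_cast
  ring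

theorem hasDerivAt_homForm_div_Kfun_pow_update (hsym : IsSymmFamily a) (hq : 0 < Afun a q)
    {ℓ : ℕ} {c : (Fin (ℓ + 1) → Fin n) → ℝ} (hc : IsSymmFamily c) (k : Fin n) :
    HasDerivAt
      (fun t => homForm c (Function.update q k t) / Kfun a (Function.update q k t) ^ (ℓ + 1))
      ((ℓ + 1) * (homForm (fun ι => c (Fin.cons k ι)) q / Kfun a q ^ ℓ
        - homForm c q / Kfun a q ^ (ℓ + 1) * aU1 a k q) / Kfun a q) (q k) := by
  have hK := (Kfun_pos hq).ne'
  have h := (hasDerivAt_homForm_update hc q k).fun_div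
    ((hasDerivAt_Kfun_update hsym hq k).fun_pow (ℓ + 1)) (by simpa using hK)
  refine h.congr_deriv ?_
  simp only [Function.update_eq_self, Nat.add_sub_cancel]
  field_simp
  push_cast
  ring

theorem hasDerivAt_aU1_update (hsym : IsSymmFamily a) (hq : 0 < Afun a q) (j k : Fin n) :
    HasDerivAt (fun t => aU1 a j (Function.update q k t))
      ((M + 2) * (aU2 a j k q - aU1 a j q * aU1 a k q) / Kfun a q) (q k) := by
  refine (hasDerivAt_homForm_div_Kfun_pow_update hsym hq (hsym.cons j) k).congr_deriv ?_
  simp only [aU1, aU2, homForm]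
  push_cast
  ring

theorem hasDerivAt_aU2_update (hsym : IsSymmFamily a) (hq : 0 < Afun a q) (i j k : Fin n) :
    HasDerivAt (fun t => aU2 a i j (Function.update q k t))
      ((M + 1) * (aU3 a i j k q - aU2 a i j q * aU1 a k q) / Kfun a q) (q k) :=
  hasDerivAt_homForm_div_Kfun_pow_update hsym hq ((hsym.cons i).cons j) k

theorem pd_Kfun (hsym : IsSymmFamily a) (hq : 0 < Afun a q) (j : Fin n) :
    pd (Kfun a) j q = aU1 a j q :=
  (hasDerivAt_Kfun_update hsym hq j).deriv

theorem pd_Kfun_sq (hsym : IsSymmFamily a) (hq : 0 < Afun a q) (j : Fin n) :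
    pd (fun r => Kfun a r ^ 2) j q = 2 * Kfun a q * aU1 a j q := by
  rw [pd, ((hasDerivAt_Kfun_update hsym hq j).fun_pow 2).deriv]
  simp

theorem hU_eq (hsym : IsSymmFamily a) (hq : 0 < Afun a q) (i j : Fin n) :
    hU a i j q = (M + 2) * (aU2 a i j q - aU1 a i q * aU1 a j q) := by
  rw [hU, pd_eq_of_eventuallyEq ((eventually_Afun_update_pos hq i).mono fun t ht =>
    pd_Kfun hsym ht j) (hasDerivAt_aU1_update hsym hq j i), aU2_comm hsym j i]
  field_simp [(Kfun_pos hq).ne']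

theorem gU_eq (hsym : IsSymmFamily a) (hq : 0 < Afun a q) (i j : Fin n) :
    gU a i j q = (M + 2) * aU2 a i j q - (M + 1) * aU1 a i q * aU1 a j q := by
  have hd := ((hasDerivAt_Kfun_update hsym hq i).const_mul 2).fun_mul
    (hasDerivAt_aU1_update hsym hq j i)
  rw [gU, pd_eq_of_eventuallyEq (g := fun r => 2 * Kfun a r * aU1 a j r)
    ((eventually_Afun_update_pos hq i).mono fun t ht => pd_Kfun_sq hsym ht j) hd,
    aU2_comm hsym j i, Function.update_eq_self]
  field_simp [(Kfun_pos hq).ne']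
  ring

end CartanMetric

section Torsion

variable {n M : ℕ} {a : (Fin (M + 3) → Fin n) → ℝ} {p : Fin n → ℝ}

def torsion (a : (Fin (M + 3) → Fin n) → ℝ) (i j k : Fin n) (p : Fin n → ℝ) : ℝ :=
  aU3 a i j k p - aU2 a i j p * aU1 a k p - aU2 a i k p * aU1 a j p - aU2 a j k p * aU1 a i p
    + 2 * aU1 a i p * aU1 a j p * aU1 a k p

theorem CU_eq (hsym : IsSymmFamily a) (hp : 0 < Afun a p) (i j k : Fin n) :
    CU a i j k p = -((M + 2) * (M + 1) / 2) / Kfun a p * torsion a i j k p := by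
  have hd := ((hasDerivAt_aU2_update hsym hp i j k).const_mul ((M : ℝ) + 2)).fun_sub
    (((hasDerivAt_aU1_update hsym hp i k).const_mul ((M : ℝ) + 1)).fun_mul
      (hasDerivAt_aU1_update hsym hp j k))
  rw [CU, pd_eq_of_eventuallyEq
    (g := fun r => (M + 2) * aU2 a i j r - (M + 1) * aU1 a i r * aU1 a j r)
    ((eventually_Afun_update_pos hp k).mono fun t ht => gU_eq hsym ht i j) hd,
    torsion, Function.update_eq_self]
  field_simp [(Kfun_pos hp).ne']
  ring

theorem sum_mul_aU1 (hp : 0 < Afun a p) : ∑ x, p x * aU1 a x p = Kfun a p := by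
  have hK := (Kfun_pos hp).ne'
  have h := sum_mul_homForm_cons_div a p hK
  rwa [show homForm a p = Kfun a p ^ (M + 2 + 1) from (Kfun_pow hp).symm,
    div_self (pow_ne_zero _ hK), mul_one] at h

theorem sum_mul_aU2 (hp : 0 < Afun a p) (i : Fin n) :
    ∑ x, p x * aU2 a i x p = Kfun a p * aU1 a i p :=
  sum_mul_homForm_cons_div (fun ι => a (Fin.cons i ι)) p (Kfun_pos hp).ne'

theorem sum_mul_aU3 (hp : 0 < Afun a p) (i j : Fin n) :
    ∑ x, p x * aU3 a i j x p = Kfun a p * aU2 a i j p :=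
  sum_mul_homForm_cons_div (fun ι => a (Fin.cons i (Fin.cons j ι))) p (Kfun_pos hp).ne'

variable {aLow : Matrix (Fin n) (Fin n) ℝ}

theorem sum_aU2_mul_aLow (hInv₁ : (Matrix.of fun i j => aU2 a i j p) * aLow = 1) (i j : Fin n) :
    ∑ s, aU2 a i s p * aLow s j = if i = j then 1 else 0 := by
  simpa [Matrix.mul_apply, Matrix.one_apply] using congrFun (congrFun hInv₁ i) j

theorem sum_aLow_mul_aU2 (hInv₂ : aLow * (Matrix.of fun i j => aU2 a i j p) = 1) (i j : Fin n) :
    ∑ s, aLow i s * aU2 a s j p = if i = j then 1 else 0 := by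
  simpa [Matrix.mul_apply, Matrix.one_apply] using congrFun (congrFun hInv₂ i) j

theorem aL_eq (hp : 0 < Afun a p) (hInv₂ : aLow * (Matrix.of fun i j => aU2 a i j p) = 1)
    (i : Fin n) : aL a aLow p i = p i / Kfun a p := by
  have hK := (Kfun_pos hp).ne'
  have euler : ∀ s, aU1 a s p = (∑ x, aU2 a s x p * p x) / Kfun a p := fun s => by
    rw [eq_div_iff hK, mul_comm, ← sum_mul_aU2 hp s]
    simp only [mul_comm]
  calc aL a aLow p i = (∑ x, (∑ s, aLow i s * aU2 a s x p) * p x) / Kfun a p := by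
        simp only [aL, euler, mul_div_assoc', ← Finset.sum_div, Finset.mul_sum, Finset.sum_mul]
        rw [Finset.sum_comm]
        simp only [mul_assoc]
    _ = p i / Kfun a p := by simp [sum_aLow_mul_aU2 hInv₂]

theorem sum_aL_mul (hp : 0 < Afun a p) (hInv₂ : aLow * (Matrix.of fun i j => aU2 a i j p) = 1)
    (f : Fin n → ℝ) : ∑ s, aL a aLow p s * f s = (∑ s, p s * f s) / Kfun a p := by
  simp only [aL_eq hp hInv₂, div_mul_eq_mul_div, Finset.sum_div]

theorem sum_aL_mul_aU1 (hp : 0 < Afun a p)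
    (hInv₂ : aLow * (Matrix.of fun i j => aU2 a i j p) = 1) :
    ∑ s, aL a aLow p s * aU1 a s p = 1 := by
  rw [sum_aL_mul hp hInv₂, sum_mul_aU1 hp, div_self (Kfun_pos hp).ne']

theorem sum_aL_mul_aU2 (hsym : IsSymmFamily a) (hp : 0 < Afun a p)
    (hInv₂ : aLow * (Matrix.of fun i j => aU2 a i j p) = 1) (j : Fin n) :
    ∑ s, aL a aLow p s * aU2 a s j p = aU1 a j p := by
  simp_rw [sum_aL_mul hp hInv₂, aU2_comm hsym _ j, sum_mul_aU2 hp]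
  exact mul_div_cancel_left₀ _ (Kfun_pos hp).ne'

theorem sum_aL_mul_aU3 (hsym : IsSymmFamily a) (hp : 0 < Afun a p)
    (hInv₂ : aLow * (Matrix.of fun i j => aU2 a i j p) = 1) (j k : Fin n) :
    ∑ s, aL a aLow p s * aU3 a s j k p = aU2 a j k p := by
  simp_rw [sum_aL_mul hp hInv₂, aU3_comm₁₂ hsym _ j, aU3_comm₂₃ hsym j, sum_mul_aU3 hp]
  exact mul_div_cancel_left₀ _ (Kfun_pos hp).ne'

theorem sum_aL_mul_torsion (hsym : IsSymmFamily a) (hp : 0 < Afun a p)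
    (hInv₂ : aLow * (Matrix.of fun i j => aU2 a i j p) = 1) (h k : Fin n) :
    ∑ r, aL a aLow p r * torsion a r h k p = 0 := by
  have expand : ∀ r, aL a aLow p r * torsion a r h k p =
      aL a aLow p r * aU3 a r h k p - aL a aLow p r * aU2 a r h p * aU1 a k p
        - aL a aLow p r * aU2 a r k p * aU1 a h p - aL a aLow p r * aU1 a r p * aU2 a h k p
        + aL a aLow p r * aU1 a r p * (2 * aU1 a h p * aU1 a k p) := fun r => by
    rw [torsion]; ring
  simp only [expand, Finset.sum_add_distrib, Finset.sum_sub_distrib, ← Finset.sum_mul]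
  rw [sum_aL_mul_aU3 hsym hp hInv₂, sum_aL_mul_aU2 hsym hp hInv₂,
    sum_aL_mul_aU2 hsym hp hInv₂, sum_aL_mul_aU1 hp hInv₂]
  ring

theorem sum_aL3_mul_aU2 (hsym : IsSymmFamily a)
    (hInv₁ : (Matrix.of fun i j => aU2 a i j p) * aLow = 1) (i j h : Fin n) :
    ∑ r, aL3 a aLow p r i j * aU2 a r h p = aU3 a h i j p := by
  calc ∑ r, aL3 a aLow p r i j * aU2 a r h p
      = ∑ s, (∑ r, aU2 a h r p * aLow r s) * aU3 a s i j p := by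
        simp only [aL3, Finset.sum_mul, aU2_comm hsym _ h]
        rw [Finset.sum_comm]
        exact Finset.sum_congr rfl fun _ _ => Finset.sum_congr rfl fun _ _ => by ring
    _ = aU3 a h i j p := by simp [sum_aU2_mul_aLow hInv₁]

theorem sum_aL3_mul_aU1 (hsym : IsSymmFamily a) (hp : 0 < Afun a p)
    (hInv₁ : (Matrix.of fun i j => aU2 a i j p) * aLow = 1) (i j : Fin n) :
    ∑ r, aL3 a aLow p r i j * aU1 a r p = aU2 a i j p := by
  have hK := (Kfun_pos hp).ne'
  have euler : ∀ r, aU1 a r p = (∑ x, p x * aU2 a r x p) / Kfun a p := fun r => by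
    rw [sum_mul_aU2 hp, mul_div_cancel_left₀ _ hK]
  calc ∑ r, aL3 a aLow p r i j * aU1 a r p
      = (∑ x, p x * ∑ r, aL3 a aLow p r i j * aU2 a r x p) / Kfun a p := by
        simp_rw [euler, Finset.mul_sum, Finset.sum_div, Finset.mul_sum]
        rw [Finset.sum_comm]
        exact Finset.sum_congr rfl fun _ _ => Finset.sum_congr rfl fun _ _ => by ring
    _ = aU2 a i j p := by
        simp_rw [sum_aL3_mul_aU2 hsym hInv₁, aU3_comm₁₂ hsym _ i, aU3_comm₂₃ hsym i,
          sum_mul_aU3 hp]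
        exact mul_div_cancel_left₀ _ hK

def torsionLow (a : (Fin (M + 3) → Fin n) → ℝ) (aLow : Matrix (Fin n) (Fin n) ℝ)
    (p : Fin n → ℝ) (r j k : Fin n) : ℝ :=
  aL3 a aLow p r j k - (if r = j then aU1 a k p else 0) - (if r = k then aU1 a j p else 0)
    - aL a aLow p r * aU2 a j k p + 2 * aL a aLow p r * aU1 a j p * aU1 a k p

theorem sum_aLow_mul_torsion (hInv₂ : aLow * (Matrix.of fun i j => aU2 a i j p) = 1)
    (r j k : Fin n) : ∑ s, aLow r s * torsion a s j k p = torsionLow a aLow p r j k := by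
  have expand : ∀ s, aLow r s * torsion a s j k p =
      aLow r s * aU3 a s j k p - aLow r s * aU2 a s j p * aU1 a k p
        - aLow r s * aU2 a s k p * aU1 a j p - aLow r s * aU1 a s p * aU2 a j k p
        + aLow r s * aU1 a s p * (2 * aU1 a j p * aU1 a k p) := fun s => by
    rw [torsion]; ring
  simp only [expand, Finset.sum_add_distrib, Finset.sum_sub_distrib, ← Finset.sum_mul,
    sum_aLow_mul_aU2 hInv₂, torsionLow, aL, aL3, ite_mul, one_mul, zero_mul]
  ring

theorem CL_eq (hsym : IsSymmFamily a) (hp : 0 < Afun a p)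
    (hInv₂ : aLow * (Matrix.of fun i j => aU2 a i j p) = 1) (r j k : Fin n) :
    CL a aLow p r j k = -((M + 1) / 2) / Kfun a p * torsionLow a aLow p r j k := by
  have hM : (M : ℝ) + 2 ≠ 0 := by positivity
  -- The `a_r a_s` part of `g_{rs}` drops out: `a_s = p_s / K` annihilates the torsion (Euler).
  have expand : ∀ s, gL a aLow p r s * CU a s j k p =
      -((M + 2) * (M + 1) / 2) / Kfun a p * ((1 / (M + 2)) * (aLow r s * torsion a s j k p)
        + (M + 1) / (M + 2) * aL a aLow p r * (aL a aLow p s * torsion a s j k p)) := fun s => by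
    rw [gL, CU_eq hsym hp]; ring
  simp only [CL, expand, ← Finset.mul_sum, Finset.sum_add_distrib,
    sum_aL_mul_torsion hsym hp hInv₂, sum_aLow_mul_torsion hInv₂]
  field_simp
  ring

theorem sum_aL3_mul_torsion (hsym : IsSymmFamily a) (hp : 0 < Afun a p)
    (hInv₁ : (Matrix.of fun i j => aU2 a i j p) * aLow = 1) (i j h k : Fin n) :
    ∑ r, aL3 a aLow p r i j * torsion a r h k p =
      ∑ r, aL3 a aLow p r i j * aU3 a r h k p - aU3 a h i j p * aU1 a k p
        - aU3 a k i j p * aU1 a h p - aU2 a i j p * aU2 a h k p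
        + 2 * aU2 a i j p * aU1 a h p * aU1 a k p := by
  have expand : ∀ r, aL3 a aLow p r i j * torsion a r h k p =
      aL3 a aLow p r i j * aU3 a r h k p - aL3 a aLow p r i j * aU2 a r h p * aU1 a k p
        - aL3 a aLow p r i j * aU2 a r k p * aU1 a h p
        - aL3 a aLow p r i j * aU1 a r p * aU2 a h k p
        + aL3 a aLow p r i j * aU1 a r p * (2 * aU1 a h p * aU1 a k p) := fun r => by
    rw [torsion]; ring
  simp only [expand, Finset.sum_add_distrib, Finset.sum_sub_distrib, ← Finset.sum_mul,
    sum_aL3_mul_aU2 hsym hInv₁, sum_aL3_mul_aU1 hsym hp hInv₁]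
  ring

theorem sum_torsionLow_mul_torsion (hsym : IsSymmFamily a) (hp : 0 < Afun a p)
    (hInv₂ : aLow * (Matrix.of fun i j => aU2 a i j p) = 1) (i j h k : Fin n) :
    ∑ r, torsionLow a aLow p r i j * torsion a r h k p =
      ∑ r, aL3 a aLow p r i j * torsion a r h k p - aU1 a j p * torsion a i h k p
        - aU1 a i p * torsion a j h k p := by
  have expand : ∀ r, torsionLow a aLow p r i j * torsion a r h k p =
      aL3 a aLow p r i j * torsion a r h k p
        - (if r = i then aU1 a j p * torsion a r h k p else 0)
        - (if r = j then aU1 a i p * torsion a r h k p else 0)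
        + (2 * aU1 a i p * aU1 a j p - aU2 a i j p) * (aL a aLow p r * torsion a r h k p) :=
    fun r => by
      rw [torsionLow]; split_ifs <;> ring
  simp only [expand, Finset.sum_add_distrib, Finset.sum_sub_distrib, ← Finset.mul_sum,
    sum_aL_mul_torsion hsym hp hInv₂, Finset.sum_ite_eq', Finset.mem_univ, if_true]
  ring

theorem Kfun_sq_mul_Scurv (hsym : IsSymmFamily a) (hp : 0 < Afun a p)
    (hInv₁ : (Matrix.of fun i j => aU2 a i j p) * aLow = 1)
    (hInv₂ : aLow * (Matrix.of fun i j => aU2 a i j p) = 1) (h i j k : Fin n) :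
    Kfun a p ^ 2 * Scurv a aLow p h i j k =
      (M + 1) ^ 2 / 4 * ((M + 2) * Ufun a aLow p h i j k
        + 1 / (M + 2) * (hU a h j p * hU a i k p - hU a h k p * hU a i j p)) := by
  have hK := (Kfun_pos hp).ne'
  have hM : (M : ℝ) + 2 ≠ 0 := by positivity
  have expand : ∀ r, CL a aLow p r i j * CU a r h k p - CL a aLow p r i k * CU a r h j p =
      (M + 1) ^ 2 * (M + 2) / 4 / Kfun a p ^ 2 *
        (torsionLow a aLow p r i j * torsion a r h k p
          - torsionLow a aLow p r i k * torsion a r h j p) := fun r => by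
    rw [CL_eq hsym hp hInv₂, CL_eq hsym hp hInv₂, CU_eq hsym hp, CU_eq hsym hp]
    field_simp
    ring
  rw [Scurv, Finset.sum_congr rfl fun r _ => expand r, ← Finset.mul_sum,
    Finset.sum_sub_distrib,
    sum_torsionLow_mul_torsion hsym hp hInv₂, sum_torsionLow_mul_torsion hsym hp hInv₂,
    sum_aL3_mul_torsion hsym hp hInv₁, sum_aL3_mul_torsion hsym hp hInv₁, Ufun,
    Finset.sum_sub_distrib, hU_eq hsym hp, hU_eq hsym hp, hU_eq hsym hp, hU_eq hsym hp]
  simp only [torsion]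
  -- Bring every `a^{ij}` and `a^{ijk}` to a single index order, so that `ring` sees the
  -- cancellations.
  rw [aU3_comm₁₂ hsym i h j, aU3_comm₁₂ hsym i h k, aU3_comm₂₃ hsym j i k,
    aU3_comm₁₂ hsym j k i, aU3_comm₂₃ hsym k j i, aU3_comm₂₃ hsym k h j,
    aU3_comm₁₂ hsym k j h, aU3_comm₂₃ hsym j k h,
    aU2_comm hsym i h, aU2_comm hsym j h, aU2_comm hsym k h, aU2_comm hsym k j]
  field_simp
  ring

end Torsion

theorem stmt_10_general {n M : ℕ} (a : (Fin (M + 3) → Fin n) → ℝ)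
    (hsym : aSym a) (p : Fin n → ℝ) (hA : 0 < Afun a p)
    (aLow : Matrix (Fin n) (Fin n) ℝ)
    (hInv₁ : (Matrix.of fun i j => aU2 a i j p) * aLow = 1)
    (hInv₂ : aLow * (Matrix.of fun i j => aU2 a i j p) = 1) :
    ((∃ lam : ℝ, ∀ h i j k : Fin n,
        Ufun a aLow p h i j k =
          lam * (hU a h j p * hU a i k p - hU a h k p * hU a i j p)) ↔
      (∃ S : ℝ, ∀ h i j k : Fin n,
        Kfun a p ^ 2 * Scurv a aLow p h i j k =
          S * (hU a h j p * hU a i k p - hU a h k p * hU a i j p))) ∧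
    (∀ lam : ℝ,
      (∀ h i j k : Fin n,
        Ufun a aLow p h i j k =
          lam * (hU a h j p * hU a i k p - hU a h k p * hU a i j p)) →
      ∀ h i j k : Fin n,
        Kfun a p ^ 2 * Scurv a aLow p h i j k =
          (((M + 1 : ℝ) ^ 2 / 4) * ((M + 2 : ℝ) * lam + 1 / (M + 2))) *
            (hU a h j p * hU a i k p - hU a h k p * hU a i j p)) := by
  have key := Kfun_sq_mul_Scurv hsym hA hInv₁ hInv₂
  refine ⟨⟨fun ⟨lam, hlam⟩ =>
      ⟨(M + 1) ^ 2 / 4 * ((M + 2) * lam + 1 / (M + 2)), fun h i j k => ?_⟩,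
    fun ⟨S, hS⟩ => ?_⟩, fun lam hlam h i j k => ?_⟩
  · rw [key, hlam]
    ring
  · have hc : (M + 1 : ℝ) ^ 2 / 4 * (M + 2) ≠ 0 := by positivity
    refine ⟨(S - (M + 1) ^ 2 / 4 / (M + 2)) / ((M + 1) ^ 2 / 4 * (M + 2)), fun h i j k => ?_⟩
    have hk := key h i j k
    rw [hS] at hk
    rw [div_mul_eq_mul_div, eq_div_iff hc]
    linear_combination -hk
  · rw [key, hlam]
    ring

/-- `U^{hijk} = λ (h^{hj}h^{ik} - h^{hk}h^{ij})` for some `λ` iff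
the S3-likeness condition `K² S^{hijk} = S (h^{hj}h^{ik} - h^{hk}h^{ij})` holds for
some `S`; moreover, if the former holds with `λ`, then the latter holds with
`S = ((m-2)²/4)[(m-1)λ + 1/(m-1)]`, where `m = M + 3`. -/
theorem stmt_10 {n M : ℕ} (hn : 4 ≤ n) (a : (Fin (M + 3) → Fin n) → ℝ)
    (hsym : aSym a) (p : Fin n → ℝ) (hA : 0 < Afun a p)
    (aLow : Matrix (Fin n) (Fin n) ℝ)
    (hInv₁ : (Matrix.of fun i j => aU2 a i j p) * aLow = 1)
    (hInv₂ : aLow * (Matrix.of fun i j => aU2 a i j p) = 1) :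
    ((∃ lam : ℝ, ∀ h i j k : Fin n,
        Ufun a aLow p h i j k =
          lam * (hU a h j p * hU a i k p - hU a h k p * hU a i j p)) ↔
      (∃ S : ℝ, ∀ h i j k : Fin n,
        Kfun a p ^ 2 * Scurv a aLow p h i j k =
          S * (hU a h j p * hU a i k p - hU a h k p * hU a i j p))) ∧
    (∀ lam : ℝ,
      (∀ h i j k : Fin n,
        Ufun a aLow p h i j k =
          lam * (hU a h j p * hU a i k p - hU a h k p * hU a i j p)) →
      ∀ h i j k : Fin n,
        Kfun a p ^ 2 * Scurv a aLow p h i j k =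
          (((M + 1 : ℝ) ^ 2 / 4) * ((M + 2 : ℝ) * lam + 1 / (M + 2))) *
            (hU a h j p * hU a i k p - hU a h k p * hU a i j p)) :=
  stmt_10_general a hsym p hA aLow hInv₁ hInv₂
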